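/- Let f : 𝔽₂ⁿ → 𝔽₂ with f(0) = 0 satisfy: (a) W_f(ν) + W_f(ν') ≠ 2ⁿ and W_f(ν) − W_f(ν') ≠ 2ⁿ for all ν ≠ ν' in 𝔽₂ⁿ; and (b) 2·max_{ν} W_f(ν) − min_{ν} W_f(ν) ≥ 2ⁿ. Let G be an (n,m−1)-function with G(0) = 0 such that μ₁f + μ̃·G is not affine for every nonzero (μ₁,μ̃) ∈ 𝔽₂ × 𝔽₂^{m−1}, and such that the code C_G is minimal. Let F = (f,G) be the (n,m)-function x ↦ (f(x), G(x)) and write A_{μ̃} = f + μ̃·G. Then the code C_F is minimal if and only if the following three conditions all hold: (1) for every μ̃ ∈ 𝔽₂^{m−1}∖{0} and all ν ≠ ν' in 𝔽₂ⁿ, W_{A_{μ̃}}(ν) + W_{A_{μ̃}}(ν') ≠ 2ⁿ and W_{A_{μ̃}}(ν) − W_{A_{μ̃}}(ν') ≠ 2ⁿ; (2) for every μ̃ ∈ 𝔽₂^{m−1}∖{0}, all ν, ν' ∈ 𝔽₂ⁿ, and every (i,j,k) ∈ {(1,0,0),(0,1,0),(0,0,1)}, one has (−1)^i W_f(ν)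 + (−1)^j W_G(μ̃,ν') + (−1)^k W_{A_{μ̃}}(ν+ν') ≠ 2ⁿ; (3) for all distinct μ̃, μ̃' ∈ 𝔽₂^{m−1}∖{0}, all ν, ν' ∈ 𝔽₂ⁿ, and every (i,j) ∈ {(0,1),(1,0)}, one has W_{A_{μ̃}}(ν) + (−1)^i W_G(μ̃',ν') + (−1)^j W_{A_{μ̃+μ̃'}}(ν+ν') ≠ 2ⁿ. -/

import Mathlib

def dotp {n : ℕ} (v x : Fin n → ZMod 2) : ZMod 2 := ∑ i, v i * x i

def wht {n : ℕ} (f : (Fin n → ZMod 2) → ZMod 2) (ν : Fin n → ZMod 2) : ℤ :=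
  ∑ x : Fin n → ZMod 2, (-1 : ℤ) ^ (f x + dotp ν x).val

def whtF {n m : ℕ} (F : (Fin n → ZMod 2) → (Fin m → ZMod 2))
    (μ : Fin m → ZMod 2) (ν : Fin n → ZMod 2) : ℤ :=
  wht (fun x => dotp μ (F x)) ν

def cw {n m : ℕ} (F : (Fin n → ZMod 2) → (Fin m → ZMod 2))
    (μ : Fin m → ZMod 2) (ν : Fin n → ZMod 2) :
    {x : Fin n → ZMod 2 // x ≠ 0} → ZMod 2 :=
  fun x => dotp μ (F x.1) + dotp ν x.1

def codeF {n m : ℕ} (F : (Fin n → ZMod 2) → (Fin m → ZMod 2)) :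
    Set ({x : Fin n → ZMod 2 // x ≠ 0} → ZMod 2) :=
  Set.range fun p : (Fin m → ZMod 2) × (Fin n → ZMod 2) => cw F p.1 p.2

def wt {n : ℕ} (c : {x : Fin n → ZMod 2 // x ≠ 0} → ZMod 2) : ℕ :=
  (Finset.univ.filter fun x => c x = 1).card

def IsMinimal {n : ℕ} (C : Set ({x : Fin n → ZMod 2 // x ≠ 0} → ZMod 2)) : Prop :=
  ∀ c ∈ C, ∀ c' ∈ C, c ≠ 0 → c' ≠ 0 →
    {x | c' x = 1} ⊆ {x | c x = 1} → c' = c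

def weights {n m : ℕ} (F : (Fin n → ZMod 2) → (Fin m → ZMod 2)) : Set ℕ :=
  {w | ∃ c ∈ codeF F, c ≠ 0 ∧ wt c = w}

/-!
The codeword `c(μ,ν)` of `C_F` has weight `(2ⁿ - W_F(μ,ν)) / 2`, and for binary words
`supp c' ⊆ supp c` holds exactly when `wt c = wt c' + wt (c + c')`. When no nonzero component
`μ·F` is affine, `(μ,ν) ↦ c(μ,ν)` is an injective linear map, so `C_F` is minimal iff
`W_F(q) + W_F(p + q) ≠ 2ⁿ + W_F(p)` for all nonzero `p ≠ q` (`WalshMinimal`).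

For `F = (f, G)` write `μ = (a, μ̃)` and `W(a, μ̃, ν) = W_{a f + μ̃·G}(ν)`, so that
`W(1, μ̃, ·) = W_{A_μ̃}` with `A_0 = f`, and `W(0, 0, ν) = 0` for `ν ≠ 0`. Of the three parameters
`p, q, p + q` either none has `a = 1`, and the inequality is the one for `C_G`, or exactly two do.
If the third one has `μ̃ = 0`, the inequality reads `W_{A_μ̃}(ν) ± W_{A_μ̃}(ν') ≠ 2ⁿ`: this is
condition (a) when `μ̃ = 0` and condition (1) otherwise. If not, it relates `W_{A_μ̃}`,
`W_G(μ̃', ·)` and `W_{A_{μ̃+μ̃'}}`, and splitting according to whether `μ̃ ∈ {0, μ̃'}` gives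
conditions (2) and (3).
-/

open Finset Matrix

theorem dotp_eq_dotProduct {n : ℕ} (v x : Fin n → ZMod 2) : dotp v x = v ⬝ᵥ x := rfl

theorem dotp_cons_right {k : ℕ} (μ : Fin (k + 1) → ZMod 2) (b : ZMod 2) (y : Fin k → ZMod 2) :
    dotp μ (Fin.cons b y) = μ 0 * b + dotp (Fin.tail μ) y := by
  simp [dotp, Fin.sum_univ_succ, Fin.tail]

namespace ZMod

theorem neg_one_pow_val_add_one (a : ZMod 2) : (-1 : ℤ) ^ (a + 1).val = -(-1) ^ a.val := by
  fin_cases a <;> rfl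

theorem neg_one_pow_val_eq_ite (a : ZMod 2) :
    (-1 : ℤ) ^ a.val = 1 - 2 * if a = 1 then 1 else 0 := by
  fin_cases a <;> rfl

theorem add_eq_one_iff_xor (a b : ZMod 2) : a + b = 1 ↔ a = 1 ∧ b ≠ 1 ∨ b = 1 ∧ a ≠ 1 := by
  revert a b; decide

end ZMod

theorem sum_neg_one_pow_val {α : Type*} [Fintype α] (g : α → ZMod 2) :
    ∑ x, (-1 : ℤ) ^ (g x).val = Fintype.card α - 2 * #{x | g x = 1} := by
  simp_rw [ZMod.neg_one_pow_val_eq_ite]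
  rw [sum_sub_distrib, ← mul_sum, sum_boole]
  simp

theorem sum_neg_one_pow_dotProduct {n : ℕ} {ν : Fin n → ZMod 2} (hν : ν ≠ 0) :
    ∑ x, (-1 : ℤ) ^ (ν ⬝ᵥ x).val = 0 := by
  obtain ⟨i, hi⟩ := Function.ne_iff.mp hν
  have hνi : ν i = 1 := Fin.eq_one_of_ne_zero _ hi
  -- translating by `eᵢ` flips every sign, so the sum equals its own negative
  have hflip := Equiv.sum_comp (Equiv.addRight (Pi.single i 1)) fun x => (-1 : ℤ) ^ (ν ⬝ᵥ x).val
  simp only [Equiv.coe_addRight, dotProduct_add, dotProduct_single, hνi, mul_one,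
    ZMod.neg_one_pow_val_add_one, sum_neg_distrib] at hflip
  linarith

theorem wht_zero_fun {n : ℕ} {ν : Fin n → ZMod 2} (hν : ν ≠ 0) : wht (fun _ => 0) ν = 0 := by
  simpa [wht, dotp_eq_dotProduct] using sum_neg_one_pow_dotProduct hν

theorem setOf_eq_one_subset_iff {α : Type*} [Fintype α] [DecidableEq α] (c c' : α → ZMod 2) :
    {x | c' x = 1} ⊆ {x | c x = 1} ↔
      #{x | c x = 1} = #{x | c' x = 1} + #{x | (c + c') x = 1} := by
  set A : Finset α := {x | c x = 1}
  set B : Finset α := {x | c' x = 1}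
  have hsymm : ({x | (c + c') x = 1} : Finset α) = A \ B ∪ B \ A := by
    ext x
    simp only [A, B, mem_filter, mem_univ, true_and, mem_union, mem_sdiff, Pi.add_apply]
    exact ZMod.add_eq_one_iff_xor _ _
  have hAB := card_sdiff_add_card_inter A B
  have hBA := card_sdiff_add_card_inter B A
  have hsub : {x | c' x = 1} ⊆ {x | c x = 1} ↔ #(B \ A) = 0 := by
    rw [card_eq_zero, sdiff_eq_empty_iff_subset]
    simp [A, B, Set.subset_def, subset_iff]
  rw [hsub, hsymm, card_union_of_disjoint disjoint_sdiff_sdiff, inter_comm B A] at *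
  omega

def IsAffine {n : ℕ} (g : (Fin n → ZMod 2) → ZMod 2) : Prop :=
  ∃ (ν : Fin n → ZMod 2) (ε : ZMod 2), ∀ x, g x = dotp ν x + ε

/-- For codewords `c_p, c_q` of `C_F` (with `W = W_F` and `N = 2ⁿ`), the equation
`W q + W (p + q) = N + W p` is the weight identity `wt c_p = wt c_q + wt (c_p + c_q)`, i.e.
`supp c_q ⊆ supp c_p`. -/
def WalshMinimal {P : Type*} [AddGroup P] (W : P → ℤ) (N : ℤ) : Prop :=
  ∀ p q : P, p ≠ 0 → q ≠ 0 → p + q ≠ 0 → W q + W (p + q) ≠ N + W p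

theorem WalshMinimal.ne {P : Type*} [AddGroup P] {W : P → ℤ} {N : ℤ} (h : WalshMinimal W N)
    {p q r : P} (hp : p ≠ 0) (hq : q ≠ 0) (hr : r ≠ 0) (hpqr : p + q = r) :
    W q + W r ≠ N + W p :=
  hpqr ▸ h p q hp hq (hpqr ▸ hr)

theorem walshMinimal_comp_addEquiv_iff {P P' : Type*} [AddGroup P] [AddGroup P'] (e : P' ≃+ P)
    {W : P → ℤ} {N : ℤ} : WalshMinimal (W ∘ e) N ↔ WalshMinimal W N := by
  refine ⟨fun h p q hp hq hpq => ?_, fun h p q hp hq hpq => ?_⟩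
  · simpa using h (e.symm p) (e.symm q) (by simpa) (by simpa) (by simpa [← map_add])
  · simpa using h (e p) (e q) (by simpa) (by simpa) (by simpa [← map_add])

section Code

variable {n m : ℕ} {F : (Fin n → ZMod 2) → (Fin m → ZMod 2)}

theorem cw_add (μ μ' : Fin m → ZMod 2) (ν ν' : Fin n → ZMod 2) :
    cw F (μ + μ') (ν + ν') = cw F μ ν + cw F μ' ν' := by
  ext x
  simp only [cw, dotp_eq_dotProduct, add_dotProduct, Pi.add_apply]
  abel

theorem cw_eq_zero_iff (hF0 : F 0 = 0) (hF : ∀ μ, μ ≠ 0 → ¬IsAffine fun x => dotp μ (F x))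
    {μ : Fin m → ZMod 2} {ν : Fin n → ZMod 2} : cw F μ ν = 0 ↔ μ = 0 ∧ ν = 0 := by
  refine ⟨fun h => ?_, by rintro ⟨rfl, rfl⟩; ext; simp [cw, dotp_eq_dotProduct]⟩
  have hdot : ∀ x, dotp μ (F x) = dotp ν x := by
    intro x
    rcases eq_or_ne x 0 with rfl | hx
    · simp [hF0, dotp_eq_dotProduct]
    · exact CharTwo.add_eq_zero.mp (congrFun h ⟨x, hx⟩)
  have hμ : μ = 0 := by
    by_contra hμ
    exact hF μ hμ ⟨ν, 0, by simpa using hdot⟩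
  subst hμ
  refine ⟨rfl, dotProduct_eq_zero_iff.mp fun x => ?_⟩
  simpa [dotp_eq_dotProduct, eq_comm] using hdot x

theorem two_mul_wt_cw (hF0 : F 0 = 0) (μ : Fin m → ZMod 2) (ν : Fin n → ZMod 2) :
    2 * (wt (cw F μ ν) : ℤ) = 2 ^ n - whtF F μ ν := by
  have hcard : Fintype.card {x : Fin n → ZMod 2 // x ≠ 0} = (2 ^ n - 1 : ℤ) := by
    simp [Fintype.card_subtype_compl, Nat.cast_sub Nat.one_le_two_pow]
  rw [whtF, wht, Fintype.sum_eq_add_sum_subtype_ne _ 0]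
  change _ = _ - (_ + ∑ x, (-1 : ℤ) ^ (cw F μ ν x).val)
  rw [sum_neg_one_pow_val, hcard]
  simp only [wt, hF0, dotp_eq_dotProduct, dotProduct_zero, add_zero, ZMod.val_zero, pow_zero]
  ring

theorem isMinimal_codeF_iff (hF0 : F 0 = 0)
    (hF : ∀ μ, μ ≠ 0 → ¬IsAffine fun x => dotp μ (F x)) :
    IsMinimal (codeF F) ↔ WalshMinimal (fun p : _ × _ => whtF F p.1 p.2) (2 ^ n) := by
  have hzero (p : (Fin m → ZMod 2) × (Fin n → ZMod 2)) : cw F p.1 p.2 = 0 ↔ p = 0 :=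
    (cw_eq_zero_iff hF0 hF).trans Prod.mk_eq_zero.symm
  have hsubset (p q : (Fin m → ZMod 2) × (Fin n → ZMod 2)) :
      {x | cw F q.1 q.2 x = 1} ⊆ {x | cw F p.1 p.2 x = 1} ↔
        whtF F q.1 q.2 + whtF F (p + q).1 (p + q).2 = 2 ^ n + whtF F p.1 p.2 := by
    have hp := two_mul_wt_cw hF0 p.1 p.2
    have hq := two_mul_wt_cw hF0 q.1 q.2
    have hpq := two_mul_wt_cw hF0 (p + q).1 (p + q).2
    rw [Prod.fst_add, Prod.snd_add, cw_add] at hpq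
    rw [Prod.fst_add, Prod.snd_add, setOf_eq_one_subset_iff]
    change wt _ = wt _ + wt _ ↔ _
    omega
  have heq (p q : (Fin m → ZMod 2) × (Fin n → ZMod 2)) :
      cw F q.1 q.2 = cw F p.1 p.2 ↔ p + q = 0 := by
    rw [← hzero, Prod.fst_add, Prod.snd_add, cw_add, add_eq_zero_iff_eq_neg,
      ZModModule.neg_eq_self, eq_comm]
  simp only [IsMinimal, codeF, Set.forall_mem_range, WalshMinimal, ne_eq, hzero, hsubset, heq]
  exact forall₂_congr fun p q => by tauto

end Code

theorem isMinimal_codeF_cons_iff {n m : ℕ} {f : (Fin n → ZMod 2) → ZMod 2}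
    {G : (Fin n → ZMod 2) → (Fin m → ZMod 2)} {F : (Fin n → ZMod 2) → (Fin (m + 1) → ZMod 2)}
    (hf0 : f 0 = 0) (hG0 : G 0 = 0)
    (hna : ∀ a t, ¬(a = 0 ∧ t = 0) → ¬IsAffine fun x => a * f x + dotp t (G x))
    (hF : ∀ x, F x = Fin.cons (f x) (G x)) :
    IsMinimal (codeF F) ↔
      WalshMinimal (fun p : (ZMod 2 × (Fin m → ZMod 2)) × (Fin n → ZMod 2) =>
        wht (fun x => p.1.1 * f x + dotp p.1.2 (G x)) p.2) (2 ^ n) := by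
  have hdotF (μ : Fin (m + 1) → ZMod 2) (x) :
      dotp μ (F x) = μ 0 * f x + dotp (Fin.tail μ) (G x) := by
    rw [hF, dotp_cons_right]
  have hF0 : F 0 = 0 := by rw [hF, hf0, hG0]; exact Matrix.cons_zero_zero
  have hFaff (μ) (hμ : μ ≠ 0) : ¬IsAffine fun x => dotp μ (F x) := by
    simp only [hdotF]
    refine hna _ _ fun ⟨h0, ht⟩ => hμ ?_
    rw [← Fin.cons_self_tail μ, h0, ht]
    exact Matrix.cons_zero_zero
  let e := (Fin.consLinearEquiv (ZMod 2) fun _ : Fin (m + 1) => ZMod 2).toAddEquiv.prodCongr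
    (AddEquiv.refl (Fin n → ZMod 2))
  rw [isMinimal_codeF_iff hF0 hFaff, ← walshMinimal_comp_addEquiv_iff e]
  congr! with ⟨⟨a, t⟩, ν⟩
  simp only [Function.comp_apply, whtF, hdotF]
  rfl

section Splitting

variable {V U : Type*} [AddCommGroup V] [AddCommGroup U] [Module (ZMod 2) U]
  {W : ZMod 2 → V → U → ℤ} {N : ℤ}

theorem WalshMinimal.pair_ne (h : WalshMinimal (fun p : (ZMod 2 × V) × U => W p.1.1 p.1.2 p.2) N)
    (hW : ∀ ν, ν ≠ 0 → W 0 0 ν = 0) (t : V) {ν ν' : U} (hνν' : ν ≠ ν') :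
    W 1 t ν + W 1 t ν' ≠ N ∧ W 1 t ν - W 1 t ν' ≠ N := by
  have hsum : ν + ν' ≠ 0 := by rwa [Ne, add_eq_zero_iff_eq_neg, ZModModule.neg_eq_self]
  have h₁ := h.ne (p := ((0, 0), ν + ν')) (q := ((1, t), ν)) (r := ((1, t), ν'))
    (by simpa) (by simp) (by simp) (by ext <;> simp; abel_nf; simp [two_zsmul, ZModModule.add_self])
  have h₂ := h.ne (p := ((1, t), ν')) (q := ((0, 0), ν + ν')) (r := ((1, t), ν))
    (by simp) (by simpa) (by simp) (by ext <;> simp; abel_nf; simp [two_zsmul, ZModModule.add_self])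
  simp only [hW _ hsum] at h₁ h₂
  constructor <;> omega

theorem WalshMinimal.triple_ne [Module (ZMod 2) V]
    (h : WalshMinimal (fun p : (ZMod 2 × V) × U => W p.1.1 p.1.2 p.2) N)
    (t : V) {t' : V} (ht' : t' ≠ 0) (ν ν' : U) :
    W 1 t ν + W 0 t' ν' - W 1 (t + t') (ν + ν') ≠ N ∧
      W 1 t ν - W 0 t' ν' + W 1 (t + t') (ν + ν') ≠ N := by
  have h₁ := h.ne (p := ((1, t + t'), ν + ν')) (q := ((0, t'), ν')) (r := ((1, t), ν))
    (by simp) (by simp [ht']) (by simp)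
    (by ext <;> simp <;> abel_nf <;> simp [two_zsmul, ZModModule.add_self])
  have h₂ := h.ne (p := ((0, t'), ν')) (q := ((1, t), ν)) (r := ((1, t + t'), ν + ν'))
    (by simp [ht']) (by simp) (by simp) (by ext <;> simp [add_comm])
  dsimp only at h₁ h₂
  constructor <;> omega

theorem walshMinimal_of_pair_of_triple [Module (ZMod 2) V] (hW : ∀ ν, ν ≠ 0 → W 0 0 ν = 0)
    (hG : WalshMinimal (fun p : V × U => W 0 p.1 p.2) N)
    (hpair : ∀ t ν ν', ν ≠ ν' → W 1 t ν + W 1 t ν' ≠ N ∧ W 1 t ν - W 1 t ν' ≠ N)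
    (htriple : ∀ t t', t' ≠ 0 → ∀ ν ν',
      W 1 t ν + W 0 t' ν' - W 1 (t + t') (ν + ν') ≠ N ∧
        W 1 t ν - W 0 t' ν' + W 1 (t + t') (ν + ν') ≠ N) :
    WalshMinimal (fun p : (ZMod 2 × V) × U => W p.1.1 p.1.2 p.2) N := by
  have zero_one (t ν t' ν') (hp : (t, ν) ≠ 0) :
      W 1 t' ν' + W 1 (t + t') (ν + ν') ≠ N + W 0 t ν := by
    rcases eq_or_ne t 0 with rfl | ht
    · have hν : ν ≠ 0 := by simpa using hp
      have := (hpair t' ν' (ν + ν') (by simpa using hν)).1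
      rw [zero_add, hW ν hν]; omega
    · have := (htriple t' t ht ν' ν).2
      rw [add_comm t, add_comm ν]; omega
  have one_zero (t ν t' ν') (hq : (t', ν') ≠ 0) :
      W 0 t' ν' + W 1 (t + t') (ν + ν') ≠ N + W 1 t ν := by
    rcases eq_or_ne t' 0 with rfl | ht'
    · have hν' : ν' ≠ 0 := by simpa using hq
      have := (hpair t (ν + ν') ν (by simpa using hν')).2
      rw [add_zero, hW ν' hν']; omega
    · have := (htriple (t + t') t' ht' (ν + ν') ν').1
      rw [add_assoc, ZModModule.add_self, add_zero, add_assoc, ZModModule.add_self,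
        add_zero] at this
      omega
  have zmod_two_cases : ∀ a : ZMod 2, a = 0 ∨ a = 1 := by decide
  rintro ⟨⟨a, t⟩, ν⟩ ⟨⟨a', t'⟩, ν'⟩ hp hq hpq
  rcases zmod_two_cases a with rfl | rfl <;> rcases zmod_two_cases a' with rfl | rfl
  · simpa using hG (t, ν) (t', ν') (by simpa using hp) (by simpa using hq) (by simpa using hpq)
  · simpa using zero_one t ν t' ν' (by simpa using hp)
  · simpa using one_zero t ν t' ν' (by simpa using hq)
  -- `(p, q)` and `(p, p + q)` give the same inequality, which reduces this case to the previous one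
  · have := one_zero t ν (t + t') (ν + ν') (by simpa [ZModModule.add_self] using hpq)
    rw [← add_assoc, ZModModule.add_self, zero_add, ← add_assoc, ZModModule.add_self,
      zero_add] at this
    show W 1 t' ν' + W (1 + 1) (t + t') (ν + ν') ≠ N + W 1 t ν
    rw [ZModModule.add_self (1 : ZMod 2)]
    omega

theorem walshMinimal_iff_pair_and_triple [Module (ZMod 2) V]
    (hW : ∀ ν, ν ≠ 0 → W 0 0 ν = 0) (hG : WalshMinimal (fun p : V × U => W 0 p.1 p.2) N)
    (hf : ∀ ν ν', ν ≠ ν' → W 1 0 ν + W 1 0 ν' ≠ N ∧ W 1 0 ν - W 1 0 ν' ≠ N) :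
    WalshMinimal (fun p : (ZMod 2 × V) × U => W p.1.1 p.1.2 p.2) N ↔
      (∀ t, t ≠ 0 → ∀ ν ν', ν ≠ ν' → W 1 t ν + W 1 t ν' ≠ N ∧ W 1 t ν - W 1 t ν' ≠ N) ∧
      (∀ t t', t' ≠ 0 → ∀ ν ν',
        W 1 t ν + W 0 t' ν' - W 1 (t + t') (ν + ν') ≠ N ∧
          W 1 t ν - W 0 t' ν' + W 1 (t + t') (ν + ν') ≠ N) :=
  ⟨fun h => ⟨fun t _ _ _ => h.pair_ne hW t, fun t _ ht' => h.triple_ne t ht'⟩,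
    fun ⟨hpair, htriple⟩ => walshMinimal_of_pair_of_triple hW hG
      (fun t => (eq_or_ne t 0).elim (fun ht => ht ▸ hf) (hpair t)) htriple⟩

theorem forall_triple_ne_iff [Module (ZMod 2) V] :
    (∀ t t', t' ≠ 0 → ∀ ν ν',
        W 1 t ν + W 0 t' ν' - W 1 (t + t') (ν + ν') ≠ N ∧
          W 1 t ν - W 0 t' ν' + W 1 (t + t') (ν + ν') ≠ N) ↔
      (∀ t, t ≠ 0 → ∀ ν ν', -W 1 0 ν + W 0 t ν' + W 1 t (ν + ν') ≠ N ∧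
        W 1 0 ν - W 0 t ν' + W 1 t (ν + ν') ≠ N ∧ W 1 0 ν + W 0 t ν' - W 1 t (ν + ν') ≠ N) ∧
      (∀ t t', t ≠ 0 → t' ≠ 0 → t ≠ t' → ∀ ν ν',
        W 1 t ν + W 0 t' ν' - W 1 (t + t') (ν + ν') ≠ N ∧
          W 1 t ν - W 0 t' ν' + W 1 (t + t') (ν + ν') ≠ N) := by
  refine ⟨fun h => ⟨fun t ht ν ν' => ?_, fun t t' _ ht' _ => h t t' ht'⟩,
    fun ⟨h2, h3⟩ t t' ht' ν ν' => ?_⟩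
  · have h₀ := h 0 t ht ν ν'
    have hₜ := (h t t ht (ν + ν') ν').1
    rw [zero_add] at h₀
    rw [ZModModule.add_self, add_assoc ν, ZModModule.add_self, add_zero] at hₜ
    refine ⟨?_, ?_, ?_⟩ <;> omega
  rcases eq_or_ne t 0 with rfl | ht
  · have := h2 t' ht' ν ν'
    rw [zero_add]
    constructor <;> omega
  rcases eq_or_ne t t' with rfl | htt'
  · have := h2 t ht (ν + ν') ν'
    rw [add_assoc ν, ZModModule.add_self, add_zero] at this
    rw [ZModModule.add_self]
    constructor <;> omega
  · exact h3 t t' ht ht' htt' ν ν'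

end Splitting

theorem stmt9_general (n m' : ℕ) (f : (Fin n → ZMod 2) → ZMod 2) (hf0 : f 0 = 0)
    (ha : ∀ ν ν' : Fin n → ZMod 2, ν ≠ ν' →
      wht f ν + wht f ν' ≠ 2 ^ n ∧ wht f ν - wht f ν' ≠ 2 ^ n)
    (G : (Fin n → ZMod 2) → (Fin m' → ZMod 2)) (hG0 : G 0 = 0)
    (hna : ∀ (μ₁ : ZMod 2) (μt : Fin m' → ZMod 2), ¬(μ₁ = 0 ∧ μt = 0) →
      ¬ ∃ (ν : Fin n → ZMod 2) (ε : ZMod 2),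
        ∀ x, μ₁ * f x + dotp μt (G x) = dotp ν x + ε)
    (hGmin : IsMinimal (codeF G))
    (F : (Fin n → ZMod 2) → (Fin (m' + 1) → ZMod 2))
    (hF : ∀ x, F x = Fin.cons (f x) (G x)) :
    IsMinimal (codeF F) ↔
      ((∀ μt : Fin m' → ZMod 2, μt ≠ 0 → ∀ ν ν' : Fin n → ZMod 2, ν ≠ ν' →
          wht (fun x => f x + dotp μt (G x)) ν + wht (fun x => f x + dotp μt (G x)) ν' ≠ 2 ^ n ∧
          wht (fun x => f x + dotp μt (G x)) ν - wht (fun x => f x + dotp μt (G x)) ν' ≠ 2 ^ n) ∧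
       (∀ μt : Fin m' → ZMod 2, μt ≠ 0 → ∀ ν ν' : Fin n → ZMod 2,
          -wht f ν + whtF G μt ν' + wht (fun x => f x + dotp μt (G x)) (ν + ν') ≠ 2 ^ n ∧
          wht f ν - whtF G μt ν' + wht (fun x => f x + dotp μt (G x)) (ν + ν') ≠ 2 ^ n ∧
          wht f ν + whtF G μt ν' - wht (fun x => f x + dotp μt (G x)) (ν + ν') ≠ 2 ^ n) ∧
       (∀ μt μt' : Fin m' → ZMod 2, μt ≠ 0 → μt' ≠ 0 → μt ≠ μt' →
          ∀ ν ν' : Fin n → ZMod 2,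
          wht (fun x => f x + dotp μt (G x)) ν + whtF G μt' ν'
              - wht (fun x => f x + dotp (μt + μt') (G x)) (ν + ν') ≠ 2 ^ n ∧
          wht (fun x => f x + dotp μt (G x)) ν - whtF G μt' ν'
              + wht (fun x => f x + dotp (μt + μt') (G x)) (ν + ν') ≠ 2 ^ n)) := by
  let W (a : ZMod 2) (t : Fin m' → ZMod 2) (ν : Fin n → ZMod 2) : ℤ :=
    wht (fun x => a * f x + dotp t (G x)) ν
  have hGaff (t) (ht : t ≠ 0) : ¬IsAffine fun x => dotp t (G x) := by
    simpa [IsAffine] using hna 0 t (by simp [ht])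
  have hW0 (ν : Fin n → ZMod 2) (hν : ν ≠ 0) : W 0 0 ν = 0 := by
    simpa [W, dotp_eq_dotProduct] using wht_zero_fun hν
  have hWmin : WalshMinimal (fun p : _ × _ => W 0 p.1 p.2) (2 ^ n) := by
    convert (isMinimal_codeF_iff hG0 hGaff).mp hGmin using 2 with p
    simp [W, whtF]
  rw [isMinimal_codeF_cons_iff hf0 hG0 hna hF,
    walshMinimal_iff_pair_and_triple hW0 hWmin (by simpa [W, dotp_eq_dotProduct] using ha),
    forall_triple_ne_iff]
  simp only [W, whtF, one_mul, zero_mul, zero_add, dotp_eq_dotProduct, zero_dotProduct, add_zero]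

theorem stmt9 (n m' : ℕ) (f : (Fin n → ZMod 2) → ZMod 2) (hf0 : f 0 = 0)
    (ha : ∀ ν ν' : Fin n → ZMod 2, ν ≠ ν' →
      wht f ν + wht f ν' ≠ 2 ^ n ∧ wht f ν - wht f ν' ≠ 2 ^ n)
    (hb : ∃ M mi : ℤ,
      IsGreatest {w : ℤ | ∃ ν : Fin n → ZMod 2, wht f ν = w} M ∧
      IsLeast {w : ℤ | ∃ ν : Fin n → ZMod 2, wht f ν = w} mi ∧
      2 ^ n ≤ 2 * M - mi)
    (G : (Fin n → ZMod 2) → (Fin m' → ZMod 2)) (hG0 : G 0 = 0)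
    (hna : ∀ (μ₁ : ZMod 2) (μt : Fin m' → ZMod 2), ¬(μ₁ = 0 ∧ μt = 0) →
      ¬ ∃ (ν : Fin n → ZMod 2) (ε : ZMod 2),
        ∀ x, μ₁ * f x + dotp μt (G x) = dotp ν x + ε)
    (hGmin : IsMinimal (codeF G))
    (F : (Fin n → ZMod 2) → (Fin (m' + 1) → ZMod 2))
    (hF : ∀ x, F x = Fin.cons (f x) (G x)) :
    IsMinimal (codeF F) ↔
      ((∀ μt : Fin m' → ZMod 2, μt ≠ 0 → ∀ ν ν' : Fin n → ZMod 2, ν ≠ ν' →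
          wht (fun x => f x + dotp μt (G x)) ν + wht (fun x => f x + dotp μt (G x)) ν' ≠ 2 ^ n ∧
          wht (fun x => f x + dotp μt (G x)) ν - wht (fun x => f x + dotp μt (G x)) ν' ≠ 2 ^ n) ∧
       (∀ μt : Fin m' → ZMod 2, μt ≠ 0 → ∀ ν ν' : Fin n → ZMod 2,
          -wht f ν + whtF G μt ν' + wht (fun x => f x + dotp μt (G x)) (ν + ν') ≠ 2 ^ n ∧
          wht f ν - whtF G μt ν' + wht (fun x => f x + dotp μt (G x)) (ν + ν') ≠ 2 ^ n ∧
          wht f ν + whtF G μt ν' - wht (fun x => f x + dotp μt (G x)) (ν + ν') ≠ 2 ^ n) ∧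
       (∀ μt μt' : Fin m' → ZMod 2, μt ≠ 0 → μt' ≠ 0 → μt ≠ μt' →
          ∀ ν ν' : Fin n → ZMod 2,
          wht (fun x => f x + dotp μt (G x)) ν + whtF G μt' ν'
              - wht (fun x => f x + dotp (μt + μt') (G x)) (ν + ν') ≠ 2 ^ n ∧
          wht (fun x => f x + dotp μt (G x)) ν - whtF G μt' ν'
              + wht (fun x => f x + dotp (μt + μt') (G x)) (ν + ν') ≠ 2 ^ n)) :=
  stmt9_general n m' f hf0 ha G hG0 hna hGmin F hF
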